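/- arXiv:2510.26587 — 2 statements merged into one kernel-verified Lean document; each statement's English description precedes it below -/
import Mathlib

section
/- Let T = Σ uᵢ⊗vᵢ⊗wᵢ be a tensor in K^{m×n×p} such that the uᵢ are linearly independent, the vᵢ are linearly independent, and every wᵢ is nonzero. Then rank(T) = r and T has a unique matrix-vector decomposition of rank r (uniqueness up to permutation of the terms M_ℓ ⊗ w_ℓ and rescaling within each term). -/
open Matrix BigOperators Polynomial

variable {K : Type*} [Field K]

/-- Tensor rank: smallest `r` such that `T` is a sum of `r` rank-one tensors. -/
noncomputable def tensorRank {m n p : ℕ} (T : Fin m → Fin n → Fin p → K) : ℕ :=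
  sInf {r | ∃ (u : Fin r → Fin m → K) (v : Fin r → Fin n → K) (w : Fin r → Fin p → K),
    T = fun a b c => ∑ i, u i a * v i b * w i c}

/-- Matrix-vector decomposition: `T = ∑ M ℓ ⊗ w ℓ` with nonzero matrices,
nonzero and pairwise non-collinear vectors. -/
def IsMVDecomp {m n p q : ℕ} (T : Fin m → Fin n → Fin p → K)
    (M : Fin q → Matrix (Fin m) (Fin n) K) (w : Fin q → Fin p → K) : Prop :=
  (∀ ℓ, M ℓ ≠ 0) ∧ (∀ ℓ, w ℓ ≠ 0) ∧
  (∀ ℓ ℓ' : Fin q, ℓ ≠ ℓ' → ∀ c : K, w ℓ' ≠ c • w ℓ) ∧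
  T = fun a b c => ∑ ℓ, M ℓ a b * w ℓ c

/-- Column space of a matrix. -/
noncomputable def colSpace {m n : ℕ} (M : Matrix (Fin m) (Fin n) K) :
    Submodule K (Fin m → K) := LinearMap.range M.mulVecLin

/-- A finite family of subspaces is in direct sum. -/
def DirectSumFamily {q : ℕ} {W : Type*} [AddCommGroup W] [Module K W]
    (E : Fin q → Submodule K W) : Prop :=
  ∀ x : Fin q → W, (∀ ℓ, x ℓ ∈ E ℓ) → (∑ ℓ, x ℓ) = 0 → ∀ ℓ, x ℓ = 0

/-- The 3-slices of an order-3 tensor. -/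
def slice3 {m n p : ℕ} (T : Fin m → Fin n → Fin p → K) (k : Fin p) :
    Matrix (Fin m) (Fin n) K := fun i j => T i j k

/-!
Contract `T` along a covector `φ` with `⟨w i, φ⟩ ≠ 0` for every `i` (one exists because `K` is
infinite). The contracted matrix `∑ ⟨w i, φ⟩ • u i v iᵀ` has rank `r`, and for any decomposition
`T = ∑ M ℓ ⊗ γ ℓ` it is a linear combination of the `M ℓ`; hence `r` bounds the tensor rank and
`∑ rank M ℓ` from below. When `∑ rank M ℓ = r`, the column spaces of the `M ℓ` form a direct sum
containing every `u i`. Splitting `u i` along it and comparing components slice by slice shows that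
`u i` lies in the column space of the unique `M ℓ` whose `γ ℓ` spans the line of `w i`, and that
`M ℓ ⊗ γ ℓ` is the sum of the terms `u i ⊗ v i ⊗ w i` with `w i` on that line. So every such
decomposition groups the rank-one terms by the line `K ∙ w i`.
-/

open Module Submodule

theorem exists_forall_dotProduct_ne_zero [Infinite K] {ι n : Type*} [Finite ι] [Fintype n]
    (z : ι → n → K) (hz : ∀ i, z i ≠ 0) : ∃ φ : n → K, ∀ i, z i ⬝ᵥ φ ≠ 0 := by
  classical
  obtain ⟨f, hf⟩ := Module.exists_dual_forall_apply_ne_zero (K := K) z hz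
  refine ⟨fun c => f fun j => if c = j then 1 else 0, fun i => ?_⟩
  simpa [dotProduct, LinearMap.pi_apply_eq_sum_univ f (z i)] using hf i

theorem LinearIndependent.exists_dotProduct_eq_ite {ι n : Type*} [Fintype ι] [DecidableEq ι]
    [Fintype n] {v : ι → n → K} (hv : LinearIndependent K v) :
    ∃ x : ι → n → K, ∀ i j, v i ⬝ᵥ x j = if i = j then 1 else 0 := by
  have hrank : (Matrix.of v).rank = Fintype.card ι := LinearIndependent.rank_matrix hv
  have hsurj : Function.Surjective (Matrix.of v).mulVec := by
    rw [← Matrix.coe_mulVecLin, ← LinearMap.range_eq_top]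
    exact Submodule.eq_top_of_finrank_eq (by rw [finrank_fintype_fun_eq_card]; exact hrank)
  obtain ⟨B, hB⟩ := Matrix.mulVec_surjective_iff_exists_right_inverse.mp hsurj
  refine ⟨fun j b => B b j, fun i j => ?_⟩
  rw [← Matrix.one_apply, ← hB]
  rfl

theorem finrank_colSpace {m n : ℕ} (M : Matrix (Fin m) (Fin n) K) :
    finrank K (colSpace M) = M.rank :=
  rfl

section RankOneSums

variable {ι : Type*} {m n : ℕ} (u : ι → Fin m → K) (v : ι → Fin n → K) (s : Finset ι) (c : ι → K)

theorem sum_smul_vecMulVec_mulVec (x : Fin n → K) :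
    (∑ i ∈ s, c i • vecMulVec (u i) (v i)) *ᵥ x = ∑ i ∈ s, (c i * (v i ⬝ᵥ x)) • u i := by
  simp [Matrix.sum_mulVec, Matrix.smul_mulVec, vecMulVec_mulVec, mul_smul]

theorem colSpace_sum_smul_vecMulVec_le :
    colSpace (∑ i ∈ s, c i • vecMulVec (u i) (v i)) ≤ span K (u '' s) := by
  rintro _ ⟨x, rfl⟩
  rw [Matrix.mulVecLin_apply, sum_smul_vecMulVec_mulVec]
  exact sum_mem fun i hi => smul_mem _ _ (subset_span (Set.mem_image_of_mem u hi))

variable {u v c}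

theorem colSpace_sum_smul_vecMulVec [Fintype ι] (hv : LinearIndependent K v)
    (hc : ∀ i ∈ s, c i ≠ 0) :
    colSpace (∑ i ∈ s, c i • vecMulVec (u i) (v i)) = span K (u '' s) := by
  classical
  refine le_antisymm (colSpace_sum_smul_vecMulVec_le u v s c) (span_le.mpr ?_)
  rintro _ ⟨j, hj, rfl⟩
  obtain ⟨x, hx⟩ := hv.exists_dotProduct_eq_ite
  refine ⟨(c j)⁻¹ • x j, ?_⟩
  rw [Matrix.mulVecLin_apply, sum_smul_vecMulVec_mulVec]
  simp [dotProduct_smul, hx, Finset.mem_coe.mp hj, hc j hj]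

theorem rank_sum_smul_vecMulVec [Fintype ι] (hu : LinearIndependent K u)
    (hv : LinearIndependent K v) (hc : ∀ i ∈ s, c i ≠ 0) :
    (∑ i ∈ s, c i • vecMulVec (u i) (v i)).rank = s.card := by
  rw [← finrank_colSpace, colSpace_sum_smul_vecMulVec s hv hc, Set.image_eq_range]
  exact (finrank_span_eq_card (hu.comp _ Subtype.val_injective)).trans (Fintype.card_coe s)

end RankOneSums

section DirectSum

variable {W : Type*} [AddCommGroup W] [Module K W] {q : ℕ}

theorem directSumFamily_of_sum_finrank_le [FiniteDimensional K W] {E : Fin q → Submodule K W}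
    {F : Submodule K W} (hF : ∀ x ∈ F, ∃ y : Fin q → W, (∀ ℓ, y ℓ ∈ E ℓ) ∧ ∑ ℓ, y ℓ = x)
    (h : ∑ ℓ, finrank K (E ℓ) ≤ finrank K F) : DirectSumFamily E := by
  let S : ((ℓ : Fin q) → E ℓ) →ₗ[K] W := LinearMap.lsum K (fun ℓ => E ℓ) K fun ℓ => (E ℓ).subtype
  have hFS : F ≤ LinearMap.range S := fun x hx => by
    obtain ⟨y, hy, rfl⟩ := hF x hx
    exact ⟨fun ℓ => ⟨y ℓ, hy ℓ⟩, by simp [S]⟩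
  have hker : LinearMap.ker S = ⊥ := by
    have := S.finrank_range_add_finrank_ker
    rw [finrank_pi_fintype] at this
    have := Submodule.finrank_mono hFS
    exact Submodule.finrank_eq_zero.mp (by omega)
  intro x hx hsum ℓ
  have : (fun ℓ => (⟨x ℓ, hx ℓ⟩ : E ℓ)) ∈ LinearMap.ker S := by simpa [S] using hsum
  rw [hker, mem_bot] at this
  simpa using congrArg (fun y => (y ℓ : W)) this

theorem DirectSumFamily.eq_of_sum_eq {E : Fin q → Submodule K W} (hE : DirectSumFamily E)
    {x y : Fin q → W} (hx : ∀ ℓ, x ℓ ∈ E ℓ) (hy : ∀ ℓ, y ℓ ∈ E ℓ) (h : ∑ ℓ, x ℓ = ∑ ℓ, y ℓ) :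
    x = y := by
  funext ℓ
  refine sub_eq_zero.mp (hE (x - y) (fun ℓ => sub_mem (hx ℓ) (hy ℓ)) ?_ ℓ)
  simp [Finset.sum_sub_distrib, h]

theorem DirectSumFamily.eq_of_sum_eq_of_colSpace_le {m n : ℕ} {E : Fin q → Submodule K (Fin m → K)}
    (hE : DirectSumFamily E) {A B : Fin q → Matrix (Fin m) (Fin n) K}
    (hA : ∀ ℓ, colSpace (A ℓ) ≤ E ℓ) (hB : ∀ ℓ, colSpace (B ℓ) ≤ E ℓ)
    (h : ∑ ℓ, A ℓ = ∑ ℓ, B ℓ) : A = B := by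
  funext ℓ
  refine Matrix.ext_of_mulVec_single fun b => congrFun (hE.eq_of_sum_eq
    (fun ℓ => hA ℓ ⟨Pi.single b 1, rfl⟩) (fun ℓ => hB ℓ ⟨Pi.single b 1, rfl⟩) ?_) ℓ
  simp only [Matrix.mulVecLin_apply, ← Matrix.sum_mulVec, h]

end DirectSum

section Lines

variable {V : Type*} [AddCommGroup V] [Module K V]

theorem span_singleton_eq_span_singleton_iff_exists_smul {x y : V} (hy : y ≠ 0) :
    K ∙ x = K ∙ y ↔ ∃ c : K, y = c • x := by
  rw [span_singleton_eq_span_singleton]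
  constructor
  · rintro ⟨c, rfl⟩
    exact ⟨c, rfl⟩
  · rintro ⟨c, rfl⟩
    exact ⟨Units.mk0 c (left_ne_zero_of_smul hy), rfl⟩

theorem injective_span_singleton_iff {κ : Type*} {γ : κ → V} (hγ : ∀ ℓ, γ ℓ ≠ 0) :
    Function.Injective (fun ℓ => K ∙ γ ℓ) ↔ ∀ ℓ ℓ', ℓ ≠ ℓ' → ∀ c : K, γ ℓ' ≠ c • γ ℓ := by
  simp only [Function.Injective, span_singleton_eq_span_singleton_iff_exists_smul (hγ _)]
  refine ⟨fun h ℓ ℓ' hne c hc => hne (h ⟨c, hc⟩), fun h ℓ ℓ' ⟨c, hc⟩ => ?_⟩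
  by_contra hne
  exact h ℓ ℓ' hne c hc

theorem span_singleton_eq_of_forall_smul_eq_smul {α : Type*} {w δ : α → K} {y z : V}
    (hw : w ≠ 0) (hδ : δ ≠ 0) (hy : y ≠ 0) (h : ∀ c, w c • y = δ c • z) : K ∙ w = K ∙ δ := by
  obtain ⟨c₀, hc₀⟩ : ∃ c, δ c ≠ 0 := Function.ne_iff.mp hδ
  have hz : z = ((δ c₀)⁻¹ * w c₀) • y := by rw [mul_smul, h c₀, inv_smul_smul₀ hc₀]
  have hwδ : w = ((δ c₀)⁻¹ * w c₀) • δ := funext fun c => smul_left_injective K hy <| by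
    simp only [h c, hz, smul_smul, Pi.smul_apply, smul_eq_mul]
    ring_nf
  rw [eq_comm, span_singleton_eq_span_singleton_iff_exists_smul hw]
  exact ⟨_, hwδ⟩

end Lines

section Slices

variable {κ : Type*} [Fintype κ] {m n p : ℕ}

theorem slice3_eq_sum_smul {T : Fin m → Fin n → Fin p → K} {M : κ → Matrix (Fin m) (Fin n) K}
    {γ : κ → Fin p → K} (hT : T = fun a b c => ∑ ℓ, M ℓ a b * γ ℓ c) (c : Fin p) :
    slice3 T c = ∑ ℓ, γ ℓ c • M ℓ := by
  subst hT
  ext a b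
  simp [slice3, Matrix.sum_apply, mul_comm]

theorem sum_dotProduct_smul (M : κ → Matrix (Fin m) (Fin n) K) (γ : κ → Fin p → K)
    (φ : Fin p → K) : ∑ ℓ, (γ ℓ ⬝ᵥ φ) • M ℓ = ∑ c, φ c • ∑ ℓ, γ ℓ c • M ℓ := by
  simp only [dotProduct, Finset.sum_smul, Finset.smul_sum, smul_smul, mul_comm]
  exact Finset.sum_comm

end Slices

section Contraction

variable {ι κ : Type*} [Fintype ι] [Fintype κ] {m n p : ℕ}
  {u : ι → Fin m → K} {v : ι → Fin n → K} {w : ι → Fin p → K}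

theorem exists_colSpace_sum_smul_eq_span [Infinite K] {M : κ → Matrix (Fin m) (Fin n) K}
    {γ : κ → Fin p → K} (hv : LinearIndependent K v) (hw : ∀ i, w i ≠ 0)
    (hslice : ∀ c, ∑ ℓ, γ ℓ c • M ℓ = ∑ i, w i c • vecMulVec (u i) (v i)) :
    ∃ t : κ → K, colSpace (∑ ℓ, t ℓ • M ℓ) = span K (Set.range u) := by
  obtain ⟨φ, hφ⟩ := exists_forall_dotProduct_ne_zero w hw
  refine ⟨fun ℓ => γ ℓ ⬝ᵥ φ, ?_⟩
  simp_rw [sum_dotProduct_smul, hslice, ← sum_dotProduct_smul, ← Set.image_univ, ← Finset.coe_univ]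
  exact colSpace_sum_smul_vecMulVec _ hv fun i _ => hφ i

theorem card_le_card_of_slices_eq [Infinite K] (hu : LinearIndependent K u)
    (hv : LinearIndependent K v) (hw : ∀ i, w i ≠ 0) {x : κ → Fin m → K} {y : κ → Fin n → K}
    {z : κ → Fin p → K}
    (h : ∀ c, ∑ j, z j c • vecMulVec (x j) (y j) = ∑ i, w i c • vecMulVec (u i) (v i)) :
    Fintype.card ι ≤ Fintype.card κ := by
  obtain ⟨t, ht⟩ := exists_colSpace_sum_smul_eq_span hv hw h
  calc Fintype.card ι = finrank K (span K (Set.range u)) := (finrank_span_eq_card hu).symm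
    _ = finrank K (colSpace (∑ j, t j • vecMulVec (x j) (y j))) := by rw [ht]
    _ ≤ finrank K (span K (Set.range x)) := by
      refine Submodule.finrank_mono ?_
      simpa using colSpace_sum_smul_vecMulVec_le x y Finset.univ t
    _ ≤ Fintype.card κ := finrank_range_le_card x

end Contraction

theorem eq_ite_sum_of_injective {κ β V : Type*} [Fintype κ] [DecidableEq β] [AddCommMonoid V]
    {f : κ → β} (hf : Function.Injective f) {y : κ → V} {b : β} (hy : ∀ ℓ, y ℓ ≠ 0 → b = f ℓ)
    (ℓ : κ) :
    y ℓ = if b = f ℓ then ∑ ℓ', y ℓ' else 0 := by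
  split_ifs with h
  · refine (Finset.sum_eq_single ℓ (fun ℓ' _ hne => ?_) (by simp)).symm
    by_contra hy'
    exact hne (hf ((hy ℓ' hy').symm.trans h))
  · by_contra hy'
    exact h (hy ℓ hy')

section Structure

variable {ι : Type*} [Fintype ι] {m n p q : ℕ}
  {u : ι → Fin m → K} {v : ι → Fin n → K} {w : ι → Fin p → K}
  {M : Fin q → Matrix (Fin m) (Fin n) K} {γ : Fin q → Fin p → K}

theorem exists_split_of_sum_rank_le [Infinite K] (hu : LinearIndependent K u)
    (hv : LinearIndependent K v) (hw : ∀ i, w i ≠ 0)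
    (hslice : ∀ c, ∑ ℓ, γ ℓ c • M ℓ = ∑ i, w i c • vecMulVec (u i) (v i))
    (hrank : ∑ ℓ, (M ℓ).rank ≤ Fintype.card ι) :
    ∃ y : ι → Fin q → Fin m → K, (∀ i, ∑ ℓ, y i ℓ = u i) ∧
      ∀ ℓ c, γ ℓ c • M ℓ = ∑ i, w i c • vecMulVec (y i ℓ) (v i) := by
  obtain ⟨t, ht⟩ := exists_colSpace_sum_smul_eq_span hv hw hslice
  have hcover : ∀ x ∈ colSpace (∑ ℓ, t ℓ • M ℓ),
      ∃ y : Fin q → Fin m → K, (∀ ℓ, y ℓ ∈ colSpace (M ℓ)) ∧ ∑ ℓ, y ℓ = x := by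
    rintro _ ⟨z, rfl⟩
    refine ⟨fun ℓ => t ℓ • M ℓ *ᵥ z, fun ℓ => smul_mem _ _ ⟨z, rfl⟩, ?_⟩
    simp
  have hE : DirectSumFamily fun ℓ => colSpace (M ℓ) :=
    directSumFamily_of_sum_finrank_le hcover (by rwa [ht, finrank_span_eq_card hu])
  choose y hy hsum using fun i => hcover (u i) (ht ▸ subset_span ⟨i, rfl⟩)
  refine ⟨y, hsum, fun ℓ c => congrFun (hE.eq_of_sum_eq_of_colSpace_le
    (A := fun ℓ => γ ℓ c • M ℓ) (B := fun ℓ => ∑ i, w i c • vecMulVec (y i ℓ) (v i))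
    (fun ℓ => ?_) (fun ℓ => ?_) ?_) ℓ⟩
  · rintro _ ⟨z, rfl⟩
    exact ⟨γ ℓ c • z, by simp⟩
  · refine (colSpace_sum_smul_vecMulVec_le (y · ℓ) v Finset.univ (w · c)).trans (span_le.mpr ?_)
    rintro _ ⟨i, -, rfl⟩
    exact hy i ℓ
  · rw [hslice, Finset.sum_comm]
    simp_rw [← Finset.smul_sum, ← hsum]
    ext a b
    simp [Matrix.sum_apply, vecMulVec_apply, Finset.sum_mul]

theorem eq_ite_of_smul_eq_sum (hv : LinearIndependent K v) (hw : ∀ i, w i ≠ 0)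
    (hγ : ∀ ℓ, γ ℓ ≠ 0) (hinj : Function.Injective fun ℓ => K ∙ γ ℓ)
    {y : ι → Fin q → Fin m → K} (hsum : ∀ i, ∑ ℓ, y i ℓ = u i)
    (hterm : ∀ ℓ c, γ ℓ c • M ℓ = ∑ i, w i c • vecMulVec (y i ℓ) (v i)) (i : ι) (ℓ : Fin q) :
    y i ℓ = if K ∙ w i = K ∙ γ ℓ then u i else 0 := by
  classical
  obtain ⟨x, hx⟩ := hv.exists_dotProduct_eq_ite
  have hcoeff : ∀ ℓ c, w i c • y i ℓ = γ ℓ c • M ℓ *ᵥ x i := fun ℓ c => by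
    rw [← Matrix.smul_mulVec, hterm, sum_smul_vecMulVec_mulVec]
    simp [hx]
  rw [← hsum i]
  exact eq_ite_sum_of_injective hinj (fun ℓ hy =>
    span_singleton_eq_of_forall_smul_eq_smul (hw i) (hγ ℓ) hy (hcoeff ℓ)) ℓ

theorem smul_eq_sum_filter_of_sum_rank_le [Infinite K] (hu : LinearIndependent K u)
    (hv : LinearIndependent K v) (hw : ∀ i, w i ≠ 0) (hγ : ∀ ℓ, γ ℓ ≠ 0)
    (hinj : Function.Injective fun ℓ => K ∙ γ ℓ)
    (hslice : ∀ c, ∑ ℓ, γ ℓ c • M ℓ = ∑ i, w i c • vecMulVec (u i) (v i))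
    (hrank : ∑ ℓ, (M ℓ).rank ≤ Fintype.card ι) :
    (∀ ℓ c, γ ℓ c • M ℓ = ∑ i ∈ Finset.univ.filter (fun i => K ∙ w i = K ∙ γ ℓ),
      w i c • vecMulVec (u i) (v i)) ∧ ∀ i, ∃ ℓ, K ∙ w i = K ∙ γ ℓ := by
  classical
  obtain ⟨y, hsum, hterm⟩ := exists_split_of_sum_rank_le hu hv hw hslice hrank
  have hy := eq_ite_of_smul_eq_sum hv hw hγ hinj hsum hterm
  refine ⟨fun ℓ c => ?_, fun i => ?_⟩
  · rw [hterm ℓ c, Finset.sum_filter]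
    refine Finset.sum_congr rfl fun i _ => ?_
    rw [hy i ℓ]
    split_ifs <;> simp
  · by_contra! h
    apply hu.ne_zero i
    rw [← hsum i]
    exact Finset.sum_eq_zero fun ℓ _ => by simp [hy i ℓ, h ℓ]

end Structure

theorem exists_equiv_of_injective_of_range_eq {α β γ : Type*} {f : α → γ} {g : β → γ}
    (hf : Function.Injective f) (hg : Function.Injective g) (h : Set.range f = Set.range g) :
    ∃ π : α ≃ β, ∀ a, g (π a) = f a :=
  ⟨(Equiv.ofInjective f hf).trans ((Equiv.setCongr h).trans (Equiv.ofInjective g hg).symm),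
    fun a => by simp [Equiv.apply_ofInjective_symm]⟩

theorem exists_span_singleton_injective_factorization {ι V : Type*} [Fintype ι] [AddCommGroup V]
    [Module K V] (w : ι → V) (hw : ∀ i, w i ≠ 0) :
    ∃ (q : ℕ) (γ : Fin q → V) (σ : ι → Fin q) (t : ι → K), Function.Surjective σ ∧
      Function.Injective (fun ℓ => K ∙ γ ℓ) ∧ (∀ ℓ, γ ℓ ≠ 0) ∧
      ∀ i, t i ≠ 0 ∧ w i = t i • γ (σ i) := by
  classical
  let S := Finset.univ.image fun i => K ∙ w i
  let e : S ≃ Fin S.card := S.equivFin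
  choose rep hrep using fun ℓ => Finset.mem_image.mp (e.symm ℓ).2
  let σ i := e ⟨K ∙ w i, Finset.mem_image_of_mem _ (Finset.mem_univ i)⟩
  have hline : ∀ ℓ, K ∙ w (rep ℓ) = e.symm ℓ := fun ℓ => (hrep ℓ).2
  have hσ : ∀ i, K ∙ w (rep (σ i)) = K ∙ w i := fun i => by simp [hline, σ]
  choose t ht using fun i => (span_singleton_eq_span_singleton_iff_exists_smul (hw i)).mp (hσ i)
  refine ⟨S.card, fun ℓ => w (rep ℓ), σ, t, fun ℓ => ⟨rep ℓ, ?_⟩, fun ℓ ℓ' h => ?_,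
    fun ℓ => hw (rep ℓ), fun i => ⟨left_ne_zero_of_smul (ht i ▸ hw i), ht i⟩⟩
  · simp [σ, hline]
  · simpa [hline, Subtype.ext_iff] using h

section Decompositions

variable {m n p r q : ℕ} {T : Fin m → Fin n → Fin p → K}
  {u : Fin r → Fin m → K} {v : Fin r → Fin n → K} {w : Fin r → Fin p → K}

theorem tensorRank_eq_of_linearIndependent [Infinite K]
    (hT : T = fun a b c => ∑ i, u i a * v i b * w i c) (hu : LinearIndependent K u)
    (hv : LinearIndependent K v) (hw : ∀ i, w i ≠ 0) : tensorRank T = r := by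
  refine le_antisymm (Nat.sInf_le ⟨u, v, w, hT⟩) (le_csInf ⟨r, u, v, w, hT⟩ ?_)
  rintro s ⟨x, y, z, hs⟩
  simpa using card_le_card_of_slices_eq hu hv hw fun c =>
    (slice3_eq_sum_smul (M := fun j => vecMulVec (x j) (y j)) hs c).symm.trans
      (slice3_eq_sum_smul (M := fun i => vecMulVec (u i) (v i)) hT c)

theorem exists_isMVDecomp (hT : T = fun a b c => ∑ i, u i a * v i b * w i c)
    (hu : LinearIndependent K u) (hv : LinearIndependent K v) (hw : ∀ i, w i ≠ 0) :
    ∃ (q : ℕ) (M : Fin q → Matrix (Fin m) (Fin n) K) (γ : Fin q → Fin p → K),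
      IsMVDecomp T M γ ∧ ∑ ℓ, (M ℓ).rank = r := by
  classical
  obtain ⟨q, γ, σ, t, hσ, hinj, hγ, ht⟩ :=
    exists_span_singleton_injective_factorization (K := K) w hw
  let M ℓ := ∑ i ∈ Finset.univ.filter (σ · = ℓ), t i • vecMulVec (u i) (v i)
  have hrank ℓ : (M ℓ).rank = (Finset.univ.filter (σ · = ℓ)).card :=
    rank_sum_smul_vecMulVec _ hu hv fun i _ => (ht i).1
  refine ⟨q, M, γ, ⟨fun ℓ hM => ?_, hγ, (injective_span_singleton_iff hγ).mp hinj, ?_⟩, ?_⟩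
  · obtain ⟨i, rfl⟩ := hσ ℓ
    have := hrank (σ i)
    rw [hM, Matrix.rank_zero, eq_comm, Finset.card_eq_zero] at this
    simpa using Finset.eq_empty_iff_forall_notMem.mp this i
  · subst hT
    ext a b c
    simp_rw [(ht _).2, ← Finset.sum_fiberwise Finset.univ σ, M, Matrix.sum_apply, Finset.sum_mul]
    refine Finset.sum_congr rfl fun ℓ _ => Finset.sum_congr rfl fun i hi => ?_
    rw [(Finset.mem_filter.mp hi).2]
    simp only [Pi.smul_apply, Matrix.smul_apply, vecMulVec_apply, smul_eq_mul]
    ring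
  · simp [hrank, Finset.sum_card_fiberwise_eq_card_filter]

theorem IsMVDecomp.injective_span_singleton {M : Fin q → Matrix (Fin m) (Fin n) K}
    {γ : Fin q → Fin p → K} (h : IsMVDecomp T M γ) : Function.Injective fun ℓ => K ∙ γ ℓ :=
  (injective_span_singleton_iff h.2.1).mpr h.2.2.1

theorem IsMVDecomp.smul_eq_sum_filter [Infinite K] {M : Fin q → Matrix (Fin m) (Fin n) K}
    {γ : Fin q → Fin p → K} (hT : T = fun a b c => ∑ i, u i a * v i b * w i c)
    (hu : LinearIndependent K u) (hv : LinearIndependent K v) (hw : ∀ i, w i ≠ 0)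
    (h : IsMVDecomp T M γ) (hrank : ∑ ℓ, (M ℓ).rank ≤ r) :
    (∀ ℓ c, γ ℓ c • M ℓ = ∑ i ∈ Finset.univ.filter (fun i => K ∙ w i = K ∙ γ ℓ),
      w i c • vecMulVec (u i) (v i)) ∧
    Set.range (fun ℓ => K ∙ γ ℓ) = Set.range (fun i => K ∙ w i) := by
  obtain ⟨hterm, hcover⟩ := smul_eq_sum_filter_of_sum_rank_le hu hv hw h.2.1
    h.injective_span_singleton
    (fun c => (slice3_eq_sum_smul h.2.2.2 c).symm.trans
      (slice3_eq_sum_smul (M := fun i => vecMulVec (u i) (v i)) hT c))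
    (by simp [hrank])
  refine ⟨hterm, Set.Subset.antisymm ?_ fun _ ⟨i, hi⟩ => ?_⟩
  · rintro _ ⟨ℓ, rfl⟩
    by_contra! hℓ
    obtain ⟨c, hc⟩ := Function.ne_iff.mp (h.2.1 ℓ)
    apply h.1 ℓ
    have := hterm ℓ c
    rw [Finset.filter_false_of_mem fun i _ hi => hℓ ⟨i, hi⟩, Finset.sum_empty] at this
    exact (smul_eq_zero.mp this).resolve_left hc
  · obtain ⟨ℓ, hℓ⟩ := hcover i
    exact ⟨ℓ, hℓ.symm.trans hi⟩

end Decompositions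

theorem uniqueness_theorem_form_one {m n p r : ℕ} [Infinite K]
    (T : Fin m → Fin n → Fin p → K)
    (u : Fin r → Fin m → K) (v : Fin r → Fin n → K) (w : Fin r → Fin p → K)
    (hT : T = fun a b c => ∑ i, u i a * v i b * w i c)
    (hu : LinearIndependent K u) (hv : LinearIndependent K v)
    (hw : ∀ i, w i ≠ 0) :
    tensorRank T = r ∧
    (∃ (q : ℕ) (M : Fin q → Matrix (Fin m) (Fin n) K) (γ : Fin q → Fin p → K),
      IsMVDecomp T M γ ∧ (∑ ℓ, (M ℓ).rank) = r) ∧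
    (∀ (q₁ : ℕ) (M₁ : Fin q₁ → Matrix (Fin m) (Fin n) K) (γ₁ : Fin q₁ → Fin p → K)
       (q₂ : ℕ) (M₂ : Fin q₂ → Matrix (Fin m) (Fin n) K) (γ₂ : Fin q₂ → Fin p → K),
      IsMVDecomp T M₁ γ₁ → (∑ ℓ, (M₁ ℓ).rank) = r →
      IsMVDecomp T M₂ γ₂ → (∑ ℓ, (M₂ ℓ).rank) = r →
      ∃ π : Fin q₁ ≃ Fin q₂, ∀ ℓ,
        (fun a b c => M₁ ℓ a b * γ₁ ℓ c) =
        (fun a b c => M₂ (π ℓ) a b * γ₂ (π ℓ) c)) := by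
  refine ⟨tensorRank_eq_of_linearIndependent hT hu hv hw, exists_isMVDecomp hT hu hv hw, ?_⟩
  intro q₁ M₁ γ₁ q₂ M₂ γ₂ h₁ hr₁ h₂ hr₂
  obtain ⟨hterm₁, hrange₁⟩ := h₁.smul_eq_sum_filter hT hu hv hw hr₁.le
  obtain ⟨hterm₂, hrange₂⟩ := h₂.smul_eq_sum_filter hT hu hv hw hr₂.le
  obtain ⟨π, hπ⟩ := exists_equiv_of_injective_of_range_eq h₁.injective_span_singleton
    h₂.injective_span_singleton (hrange₁.trans hrange₂.symm)
  refine ⟨π, fun ℓ => funext₃ fun a b c => ?_⟩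
  have h := hterm₂ (π ℓ) c
  rw [hπ, ← hterm₁ ℓ c] at h
  simpa [mul_comm] using congrFun₂ h.symm a b
end

section
/- Suppose a tensor T ∈ K^{m×n×p} has a matrix-vector decomposition T = Σ_{ℓ=1}^q M_ℓ ⊗ w'_ℓ where the spaces Im(M_ℓ) are in direct sum and the spaces Im(M_ℓᵀ) are in direct sum. Then T admits a decomposition T = Σ_{i=1}^r uᵢ⊗vᵢ⊗wᵢ with r = Σ_ℓ rank(M_ℓ), the uᵢ linearly independent, the vᵢ linearly independent, every wᵢ nonzero, and each wᵢ ∈ {w'₁,…,w'_q}. -/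
open Matrix BigOperators Polynomial

variable {K : Type*} [Field K]

/-! Factor each `M ℓ = U ℓ * V ℓ` through `Fin (M ℓ).rank`. Because the inner dimension equals the
rank, the columns of `U ℓ` form a basis of `Im (M ℓ)` and the rows of `V ℓ` a basis of
`Im (M ℓ)ᵀ`. Collecting all these vectors, the two direct-sum hypotheses make the columns, resp.
the rows, linearly independent, and `T = ∑ ℓ ∑ i (U ℓ).col i ⊗ (V ℓ).row i ⊗ w' ℓ`. -/

lemma col_mem_colSpace {m n : ℕ} (A : Matrix (Fin m) (Fin n) K) (j : Fin n) :
    A.col j ∈ colSpace A :=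
  ⟨Pi.single j 1, A.mulVec_single_one j⟩

lemma colSpace_mul_le {m r n : ℕ} (A : Matrix (Fin m) (Fin r) K) (B : Matrix (Fin r) (Fin n) K) :
    colSpace (A * B) ≤ colSpace A := by
  rw [colSpace, colSpace, Matrix.mulVecLin_mul]
  exact LinearMap.range_comp_le_range _ _

lemma colSpace_mul_eq_of_rank_eq {m r n : ℕ} (A : Matrix (Fin m) (Fin r) K)
    (B : Matrix (Fin r) (Fin n) K) (h : (A * B).rank = r) :
    colSpace (A * B) = colSpace A :=
  Submodule.eq_of_le_of_finrank_le (colSpace_mul_le A B) (A.rank_le_width.trans_eq h.symm)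

lemma linearIndependent_col_of_rank_eq {m ι : Type*} [Fintype ι] (A : Matrix m ι K)
    (h : A.rank = Fintype.card ι) : LinearIndependent K A.col := by
  rw [linearIndependent_iff_card_eq_finrank_span, Set.finrank, ← A.rank_eq_finrank_span_cols, h]

lemma exists_mul_eq_of_rank {m n : ℕ} (A : Matrix (Fin m) (Fin n) K) :
    ∃ (U : Matrix (Fin m) (Fin A.rank) K) (V : Matrix (Fin A.rank) (Fin n) K), U * V = A := by
  let b : Module.Basis (Fin A.rank) K (colSpace A) := Module.finBasisOfFinrankEq K _ rfl
  refine ⟨.of fun a i => (b i : Fin m → K) a,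
    .of fun i j => b.repr ⟨A.col j, col_mem_colSpace A j⟩ i, ?_⟩
  ext a j
  have h := congrArg (fun x : colSpace A => (x : Fin m → K) a)
    (b.sum_repr ⟨A.col j, col_mem_colSpace A j⟩)
  simpa [Matrix.mul_apply, Finset.sum_apply, mul_comm, -Module.Basis.sum_repr] using h

lemma linearIndependent_col_of_mul_eq {m r n : ℕ} {U : Matrix (Fin m) (Fin r) K}
    {V : Matrix (Fin r) (Fin n) K} {M : Matrix (Fin m) (Fin n) K} (hM : U * V = M)
    (hr : M.rank = r) : LinearIndependent K U.col ∧ ∀ i, U.col i ∈ colSpace M := by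
  rw [← hM] at hr ⊢
  have hU : U.rank = r := le_antisymm U.rank_le_width (hr.ge.trans (U.rank_mul_le_left V))
  refine ⟨linearIndependent_col_of_rank_eq U (by simpa using hU), fun i => ?_⟩
  rw [colSpace_mul_eq_of_rank_eq U V hr]
  exact col_mem_colSpace U i

lemma exists_rank_factorization {m n : ℕ} (M : Matrix (Fin m) (Fin n) K) :
    ∃ (U : Matrix (Fin m) (Fin M.rank) K) (V : Matrix (Fin M.rank) (Fin n) K), U * V = M ∧
      LinearIndependent K U.col ∧ LinearIndependent K V.row ∧
      (∀ i, U.col i ∈ colSpace M) ∧ ∀ i, V.row i ∈ colSpace Mᵀ := by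
  obtain ⟨U, V, hUV⟩ := exists_mul_eq_of_rank M
  obtain ⟨hU, hUmem⟩ := linearIndependent_col_of_mul_eq hUV rfl
  obtain ⟨hV, hVmem⟩ := linearIndependent_col_of_mul_eq
    (by rw [← Matrix.transpose_mul, hUV] : Vᵀ * Uᵀ = Mᵀ) M.rank_transpose
  exact ⟨U, V, hUV, hU, hV, hUmem, hVmem⟩

lemma DirectSumFamily.linearIndependent_sigma {q : ℕ} {W : Type*} [AddCommGroup W] [Module K W]
    {E : Fin q → Submodule K W} (hE : DirectSumFamily E) {ι : Fin q → Type*}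
    [∀ ℓ, Fintype (ι ℓ)] {u : ∀ ℓ, ι ℓ → W} (hu : ∀ ℓ, LinearIndependent K (u ℓ))
    (hmem : ∀ ℓ i, u ℓ i ∈ E ℓ) : LinearIndependent K fun x : Σ ℓ, ι ℓ => u x.1 x.2 := by
  rw [Fintype.linearIndependent_iff]
  rintro g hg ⟨ℓ, i⟩
  have hblock : ∀ ℓ, ∑ i, g ⟨ℓ, i⟩ • u ℓ i = 0 :=
    hE _ (fun ℓ => Submodule.sum_mem _ fun i _ => Submodule.smul_mem _ _ (hmem ℓ i))
      (by rw [Fintype.sum_sigma] at hg; exact hg)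
  exact Fintype.linearIndependent_iff.mp (hu ℓ) _ (hblock ℓ) i

theorem mv_decomp_to_rank_one_decomp {m n p q : ℕ}
    (T : Fin m → Fin n → Fin p → K)
    (M : Fin q → Matrix (Fin m) (Fin n) K) (w' : Fin q → Fin p → K)
    (hdec : IsMVDecomp T M w')
    (hcol : DirectSumFamily (fun ℓ => colSpace (M ℓ)))
    (hrow : DirectSumFamily (fun ℓ => colSpace (M ℓ)ᵀ)) :
    ∃ (r : ℕ) (u : Fin r → Fin m → K) (v : Fin r → Fin n → K) (w : Fin r → Fin p → K),
      r = (∑ ℓ, (M ℓ).rank) ∧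
      T = (fun a b c => ∑ i, u i a * v i b * w i c) ∧
      LinearIndependent K u ∧ LinearIndependent K v ∧
      (∀ i, w i ≠ 0) ∧ (∀ i, ∃ ℓ, w i = w' ℓ) := by
  obtain ⟨-, hw0, -, rfl⟩ := hdec
  choose U V hUV hU hV hUmem hVmem using fun ℓ => exists_rank_factorization (M ℓ)
  let e : Fin (∑ ℓ, (M ℓ).rank) ≃ Σ ℓ, Fin (M ℓ).rank :=
    (Fintype.equivFinOfCardEq (by simp)).symm
  refine ⟨_, fun i => (U (e i).1).col (e i).2, fun i => (V (e i).1).row (e i).2,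
    fun i => w' (e i).1, rfl, ?_, (hcol.linearIndependent_sigma hU hUmem).comp e e.injective,
    (hrow.linearIndependent_sigma hV hVmem).comp e e.injective, fun i => hw0 _, fun i => ⟨_, rfl⟩⟩
  funext a b c
  rw [e.sum_comp (fun x => (U x.1).col x.2 a * (V x.1).row x.2 b * w' x.1 c), Fintype.sum_sigma]
  refine Finset.sum_congr rfl fun ℓ _ => ?_
  rw [← congrFun (congrFun (hUV ℓ) a) b, Matrix.mul_apply, Finset.sum_mul]
  rfl
end
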